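/- arXiv:2304.05069 — 7 statements merged into one kernel-verified Lean document; each statement's English description precedes it below -/
import Mathlib

section
/- Let U, P : (0,∞) → ℝ be twice continuously differentiable functions such that P(r) = r·U'(r) − U(r) for all r > 0, and suppose there exists a constant A > 0 such that |P''(r)| ≤ A·U''(r) for all r > 0. Then for all r, s > 0 one has |P(r) − P(s) − P'(s)·(r − s)| ≤ A·(U(r) − U(s) − U'(s)·(r − s)). -/
/-!
The relative quantity `f(r|s)` is linear in `f`, and it is nonnegative for convex `f` by the
tangent line inequality. The hypothesis `|P''| ≤ A U''` makes `A U + c P` convex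
for every `|c| ≤ 1`; taking `c = 1` and `c = -1` gives `∓ P(r|s) ≤ A U(r|s)`.
-/

open Set

noncomputable section

def relative (f : ℝ → ℝ) (r s : ℝ) : ℝ :=
  f r - f s - deriv f s * (r - s)

variable {S : Set ℝ} {f g : ℝ → ℝ} {r s : ℝ}

theorem ConvexOn.relative_nonneg (hf : ConvexOn ℝ S f) (hr : r ∈ S) (hs : s ∈ S)
    (hfs : DifferentiableAt ℝ f s) : 0 ≤ relative f r s := by
  unfold relative
  rcases lt_trichotomy r s with hrs | rfl | hsr
  · have h := hf.slope_le_deriv hr hs hrs hfs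
    rw [slope_def_field, div_le_iff₀ (sub_pos.2 hrs)] at h
    nlinarith
  · simp
  · have h := hf.deriv_le_slope hs hr hsr hfs
    rw [slope_def_field, le_div_iff₀ (sub_pos.2 hsr)] at h
    nlinarith

theorem relative_add_const_mul (c : ℝ) (hgs : DifferentiableAt ℝ g s)
    (hfs : DifferentiableAt ℝ f s) :
    relative (fun x => g x + c * f x) r s = relative g r s + c * relative f r s := by
  simp only [relative, deriv_fun_add hgs (hfs.const_mul c), deriv_const_mul_field]
  ring

theorem relative_const_mul (c : ℝ) : relative (fun x => c * f x) r s = c * relative f r s := by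
  simp only [relative, deriv_const_mul_field]
  ring

theorem ContDiffOn.hasDerivAt_deriv_of_isOpen (hf : ContDiffOn ℝ 2 f S) (hS : IsOpen S)
    {x : ℝ} (hx : x ∈ S) : HasDerivAt f (deriv f x) x :=
  ((hf.differentiableOn two_ne_zero x hx).differentiableAt (hS.mem_nhds hx)).hasDerivAt

theorem ContDiffOn.hasDerivAt_deriv_deriv_of_isOpen (hf : ContDiffOn ℝ 2 f S) (hS : IsOpen S)
    {x : ℝ} (hx : x ∈ S) : HasDerivAt (deriv f) (deriv (deriv f) x) x :=
  (((hf.deriv_of_isOpen (m := 1) hS (by norm_num)).differentiableOn one_ne_zero x hx).differentiableAt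
    (hS.mem_nhds hx)).hasDerivAt

theorem convexOn_add_const_mul_of_abs_deriv_deriv_le (hS : IsOpen S) (hSc : Convex ℝ S)
    (hf : ContDiffOn ℝ 2 f S) (hg : ContDiffOn ℝ 2 g S)
    (hfg : ∀ x ∈ S, |deriv (deriv f) x| ≤ deriv (deriv g) x) {c : ℝ} (hc : |c| ≤ 1) :
    ConvexOn ℝ S (fun x => g x + c * f x) := by
  refine convexOn_of_hasDerivWithinAt2_nonneg (f' := fun x => deriv g x + c * deriv f x)
    (f'' := fun x => deriv (deriv g) x + c * deriv (deriv f) x) hSc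
    (hg.continuousOn.add (continuousOn_const.mul hf.continuousOn)) ?_ ?_ ?_ <;>
    rw [hS.interior_eq] <;> intro x hx
  · exact ((hg.hasDerivAt_deriv_of_isOpen hS hx).add
      ((hf.hasDerivAt_deriv_of_isOpen hS hx).const_mul c)).hasDerivWithinAt
  · exact ((hg.hasDerivAt_deriv_deriv_of_isOpen hS hx).add
      ((hf.hasDerivAt_deriv_deriv_of_isOpen hS hx).const_mul c)).hasDerivWithinAt
  · have hcf : |c * deriv (deriv f) x| ≤ |deriv (deriv f) x| := by
      rw [abs_mul]
      exact mul_le_of_le_one_left (abs_nonneg _) hc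
    linarith [neg_abs_le (c * deriv (deriv f) x), hfg x hx]

theorem abs_relative_le_of_abs_deriv_deriv_le (hS : IsOpen S) (hSc : Convex ℝ S)
    (hf : ContDiffOn ℝ 2 f S) (hg : ContDiffOn ℝ 2 g S)
    (hfg : ∀ x ∈ S, |deriv (deriv f) x| ≤ deriv (deriv g) x) (hr : r ∈ S) (hs : s ∈ S) :
    |relative f r s| ≤ relative g r s := by
  have key : ∀ c : ℝ, |c| ≤ 1 → 0 ≤ relative g r s + c * relative f r s := fun c hc => by
    rw [← relative_add_const_mul c (hg.hasDerivAt_deriv_of_isOpen hS hs).differentiableAt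
      (hf.hasDerivAt_deriv_of_isOpen hS hs).differentiableAt]
    exact (convexOn_add_const_mul_of_abs_deriv_deriv_le hS hSc hf hg hfg hc).relative_nonneg hr hs
      ((hg.hasDerivAt_deriv_of_isOpen hS hs).add
        ((hf.hasDerivAt_deriv_of_isOpen hS hs).const_mul c)).differentiableAt
  have hplus := key 1 (by simp)
  have hminus := key (-1) (by simp)
  rw [abs_le]
  constructor <;> linarith

end

theorem relative_pressure_bound_general
    (U P : ℝ → ℝ) (A : ℝ)
    (hU : ContDiffOn ℝ 2 U (Set.Ioi 0))
    (hP : ContDiffOn ℝ 2 P (Set.Ioi 0))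
    (hbound : ∀ r > 0, |deriv (deriv P) r| ≤ A * deriv (deriv U) r) :
    ∀ r > 0, ∀ s > 0,
      |P r - P s - deriv P s * (r - s)| ≤ A * (U r - U s - deriv U s * (r - s)) := by
  intro r hr s hs
  have hAU : ∀ x ∈ Ioi (0 : ℝ), |deriv (deriv P) x| ≤ deriv (deriv fun y => A * U y) x :=
    fun x hx => by simpa only [deriv_const_mul_field'] using hbound x hx
  have h := abs_relative_le_of_abs_deriv_deriv_le isOpen_Ioi (convex_Ioi 0) hP
    (contDiffOn_const.mul hU) hAU hr hs
  rwa [relative_const_mul] at h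

/-- Relative pressure bound: if `P(r) = r U'(r) - U(r)` and `|P''| ≤ A U''` on `(0,∞)`,
then `|P(r|s)| ≤ A · U(r|s)` for all `r, s > 0`. -/
theorem relative_pressure_bound
    (U P : ℝ → ℝ) (A : ℝ) (hA : 0 < A)
    (hU : ContDiffOn ℝ 2 U (Set.Ioi 0))
    (hP : ContDiffOn ℝ 2 P (Set.Ioi 0))
    (hPU : ∀ r > 0, P r = r * deriv U r - U r)
    (hbound : ∀ r > 0, |deriv (deriv P) r| ≤ A * deriv (deriv U) r) :
    ∀ r > 0, ∀ s > 0,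
      |P r - P s - deriv P s * (r - s)| ≤ A * (U r - U s - deriv U s * (r - s)) :=
  relative_pressure_bound_general U P A hU hP hbound
end

section
/- Let Ω ⊆ ℝ^d be a compact set, let x_1, …, x_N be points of the convex hull of Ω, and let w_1, …, w_N ∈ ℝ. If every Laguerre cell L_i(X,w) has positive Lebesgue measure, then for all indices i, j one has |w_i − w_j| ≤ 2·diam(Ω)·|x_i − x_j|, where diam(Ω) is the diameter of Ω and |·| denotes the Euclidean norm on ℝ^d. -/
open MeasureTheory

/-! A point `y` of the cell `L j` satisfies `wᵢ - wⱼ ≤ ‖y - xᵢ‖² - ‖y - xⱼ‖²`, and the right-hand side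
factors as `(‖y - xᵢ‖ - ‖y - xⱼ‖)(‖y - xᵢ‖ + ‖y - xⱼ‖) ≤ ‖xᵢ - xⱼ‖ · 2 diam(Ω)`, because `y` and the
`xₖ` all lie in the convex hull of `Ω`, which has the same diameter as `Ω`. -/

lemma norm_sub_sq_sub_norm_sub_sq_le {E : Type*} [SeminormedAddCommGroup E] (x a b : E) :
    ‖x - b‖ ^ 2 - ‖x - a‖ ^ 2 ≤ (‖x - b‖ + ‖x - a‖) * ‖a - b‖ := by
  have hdiff : ‖x - b‖ - ‖x - a‖ ≤ ‖a - b‖ := by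
    simpa using le_of_abs_le (abs_norm_sub_norm_le (x - b) (x - a))
  calc ‖x - b‖ ^ 2 - ‖x - a‖ ^ 2 = (‖x - b‖ + ‖x - a‖) * (‖x - b‖ - ‖x - a‖) := by ring
    _ ≤ (‖x - b‖ + ‖x - a‖) * ‖a - b‖ := by gcongr

lemma norm_sub_sq_sub_norm_sub_sq_le_two_mul_diam {E : Type*} [SeminormedAddCommGroup E]
    [NormedSpace ℝ E] {Ω : Set E} (hΩ : Bornology.IsBounded Ω) {x a b : E} (hx : x ∈ Ω)
    (ha : a ∈ convexHull ℝ Ω) (hb : b ∈ convexHull ℝ Ω) :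
    ‖x - b‖ ^ 2 - ‖x - a‖ ^ 2 ≤ 2 * Metric.diam Ω * ‖a - b‖ := by
  have hhull : Bornology.IsBounded (convexHull ℝ Ω) := isBounded_convexHull.mpr hΩ
  have hx' : x ∈ convexHull ℝ Ω := subset_convexHull ℝ Ω hx
  have hxa : ‖x - a‖ ≤ Metric.diam Ω := by
    rw [← dist_eq_norm, ← convexHull_diam]
    exact Metric.dist_le_diam_of_mem hhull hx' ha
  have hxb : ‖x - b‖ ≤ Metric.diam Ω := by
    rw [← dist_eq_norm, ← convexHull_diam]
    exact Metric.dist_le_diam_of_mem hhull hx' hb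
  calc ‖x - b‖ ^ 2 - ‖x - a‖ ^ 2 ≤ (‖x - b‖ + ‖x - a‖) * ‖a - b‖ :=
        norm_sub_sq_sub_norm_sub_sq_le x a b
    _ ≤ 2 * Metric.diam Ω * ‖a - b‖ := by gcongr; linarith

/-- Lipschitz bound on Laguerre weights: if every Laguerre cell of the tessellation of a
compact set `Ω` has positive Lebesgue measure, then `|wᵢ - wⱼ| ≤ 2 diam(Ω) |xᵢ - xⱼ|`. -/
theorem laguerre_weights_lipschitz
    (d N : ℕ) (Ω : Set (EuclideanSpace ℝ (Fin d))) (hΩ : IsCompact Ω)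
    (X : Fin N → EuclideanSpace ℝ (Fin d))
    (hX : ∀ i, X i ∈ convexHull ℝ Ω)
    (w : Fin N → ℝ)
    (L : Fin N → Set (EuclideanSpace ℝ (Fin d)))
    (hL : ∀ i, L i = {x ∈ Ω | ∀ j, ‖x - X i‖ ^ 2 - w i ≤ ‖x - X j‖ ^ 2 - w j})
    (hpos : ∀ i, 0 < volume (L i)) :
    ∀ i j, |w i - w j| ≤ 2 * Metric.diam Ω * ‖X i - X j‖ := by
  have hbound : ∀ i j, w i - w j ≤ 2 * Metric.diam Ω * ‖X j - X i‖ := by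
    intro i j
    have hne : (L j).Nonempty := nonempty_of_measure_ne_zero (hpos j).ne'
    rw [hL j] at hne
    obtain ⟨y, hyΩ, hy⟩ := hne
    have hcell := hy i
    have hdist := norm_sub_sq_sub_norm_sub_sq_le_two_mul_diam hΩ.isBounded hyΩ (hX j) (hX i)
    linarith
  intro i j
  exact abs_sub_le_iff.2 ⟨norm_sub_rev (X i) (X j) ▸ hbound i j, hbound j i⟩
end

section
/- Let Ω ⊆ ℝ^d be a compact set, let x_1, …, x_N ∈ ℝ^d and w_1, …, w_N ∈ ℝ, and let i ≠ j be two indices such that the Laguerre cells L_i(X,w) and L_j(X,w) both have positive (finite) Lebesgue measure. Let b_i and b_j denote the barycenters of L_i(X,w) and L_j(X,w) with respect to Lebesgue measure. Then ⟨x_i − x_j, b_i − b_j⟩ ≥ 0, where ⟨·,·⟩ is the Euclidean inner product on ℝ^d. -/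
open MeasureTheory RealInnerProductSpace

/-!
Expanding the squares, the defining inequality of `Lᵢ` against `j` reads
`⟪xᵢ - xⱼ, x⟫ ≥ m` with `m = (‖xᵢ‖² - ‖xⱼ‖² - wᵢ + wⱼ) / 2`, and that of `Lⱼ` against `i` reads
`⟪xᵢ - xⱼ, x⟫ ≤ m`. So the two cells lie on either side of a hyperplane orthogonal to
`xᵢ - xⱼ`; each barycenter is an average over its cell, hence lies in the same closed
half-space, and `⟪xᵢ - xⱼ, bᵢ⟫ ≥ m ≥ ⟪xᵢ - xⱼ, bⱼ⟫`.
-/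

section LaguerreCell

variable {ι E : Type*} [NormedAddCommGroup E]

def laguerreCell (Ω : Set E) (X : ι → E) (w : ι → ℝ) (i : ι) : Set E :=
  {x ∈ Ω | ∀ j, ‖x - X i‖ ^ 2 - w i ≤ ‖x - X j‖ ^ 2 - w j}

theorem isClosed_laguerreCell {Ω : Set E} (hΩ : IsClosed Ω) (X : ι → E) (w : ι → ℝ) (i : ι) :
    IsClosed (laguerreCell Ω X w i) := by
  have : IsClosed {x | ∀ j, ‖x - X i‖ ^ 2 - w i ≤ ‖x - X j‖ ^ 2 - w j} := by
    rw [Set.ofPred_forall]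
    exact isClosed_iInter fun j => isClosed_le (by fun_prop) (by fun_prop)
  exact hΩ.inter this

theorem isCompact_laguerreCell {Ω : Set E} (hΩ : IsCompact Ω) (X : ι → E) (w : ι → ℝ) (i : ι) :
    IsCompact (laguerreCell Ω X w i) :=
  hΩ.of_isClosed_subset (isClosed_laguerreCell hΩ.isClosed X w i) fun _ hx => hx.1

theorem laguerreCell_subset_halfSpace [InnerProductSpace ℝ E] (Ω : Set E) (X : ι → E)
    (w : ι → ℝ) (i j : ι) :
    laguerreCell Ω X w i ⊆
      {x | (‖X i‖ ^ 2 - ‖X j‖ ^ 2 - (w i - w j)) / 2 ≤ ⟪X i - X j, x⟫} := by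
  intro x hx
  have h := hx.2 j
  rw [norm_sub_sq_real, norm_sub_sq_real] at h
  rw [Set.mem_ofPred_eq, inner_sub_left, real_inner_comm x, real_inner_comm x]
  linarith

end LaguerreCell

theorem IsCompact.le_inner_setAverage {E : Type*} [NormedAddCommGroup E] [InnerProductSpace ℝ E]
    [CompleteSpace E] [MeasurableSpace E] [BorelSpace E] {μ : Measure E}
    [IsFiniteMeasureOnCompacts μ] {s : Set E} (hs : IsCompact s) (hμs : μ s ≠ 0) {c : E} {m : ℝ}
    (hsub : s ⊆ {x | m ≤ ⟪c, x⟫}) :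
    m ≤ ⟪c, ⨍ x in s, x ∂μ⟫ :=
  Convex.set_average_mem (convex_halfSpace_ge (innerₛₗ ℝ c).isLinear m)
    (isClosed_le continuous_const (continuous_const.inner continuous_id)) hμs
    hs.measure_lt_top.ne (ae_restrict_of_forall_mem hs.measurableSet hsub)
    (continuous_id.continuousOn.integrableOn_compact hs)

theorem laguerre_barycenters_monotone_general
    (d N : ℕ) (Ω : Set (EuclideanSpace ℝ (Fin d))) (hΩ : IsCompact Ω)
    (X : Fin N → EuclideanSpace ℝ (Fin d)) (w : Fin N → ℝ)
    (L : Fin N → Set (EuclideanSpace ℝ (Fin d)))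
    (hL : ∀ i, L i = {x ∈ Ω | ∀ j, ‖x - X i‖ ^ 2 - w i ≤ ‖x - X j‖ ^ 2 - w j})
    (i j : Fin N)
    (hipos : 0 < volume (L i))
    (hjpos : 0 < volume (L j))
    (b : Fin N → EuclideanSpace ℝ (Fin d))
    (hb : ∀ k, k = i ∨ k = j →
      b k = ((volume (L k)).toReal)⁻¹ • ∫ x in L k, x) :
    0 ≤ ⟪X i - X j, b i - b j⟫ := by
  have hcell : ∀ k, L k = laguerreCell Ω X w k := hL
  have hbary : ∀ k, k = i ∨ k = j → b k = ⨍ x in L k, x := fun k hk => by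
    rw [hb k hk, setAverage_eq]
    rfl
  have hbi := (isCompact_laguerreCell hΩ X w i).le_inner_setAverage (hcell i ▸ hipos.ne')
    (laguerreCell_subset_halfSpace Ω X w i j)
  have hbj := (isCompact_laguerreCell hΩ X w j).le_inner_setAverage (hcell j ▸ hjpos.ne')
    (laguerreCell_subset_halfSpace Ω X w j i)
  rw [← hcell, ← hbary i (.inl rfl)] at hbi
  rw [← hcell, ← hbary j (.inr rfl), ← neg_sub (X i), inner_neg_left] at hbj
  rw [inner_sub_right]
  linarith

/-- Monotonicity of Laguerre cell barycenters: `⟨xᵢ - xⱼ, bᵢ - bⱼ⟩ ≥ 0` where `bᵢ` is the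
barycenter of the Laguerre cell `Lᵢ(X,w)`. -/
theorem laguerre_barycenters_monotone
    (d N : ℕ) (Ω : Set (EuclideanSpace ℝ (Fin d))) (hΩ : IsCompact Ω)
    (X : Fin N → EuclideanSpace ℝ (Fin d)) (w : Fin N → ℝ)
    (L : Fin N → Set (EuclideanSpace ℝ (Fin d)))
    (hL : ∀ i, L i = {x ∈ Ω | ∀ j, ‖x - X i‖ ^ 2 - w i ≤ ‖x - X j‖ ^ 2 - w j})
    (i j : Fin N) (hij : i ≠ j)
    (hipos : 0 < volume (L i)) (hifin : volume (L i) < ⊤)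
    (hjpos : 0 < volume (L j)) (hjfin : volume (L j) < ⊤)
    (b : Fin N → EuclideanSpace ℝ (Fin d))
    (hb : ∀ k, k = i ∨ k = j →
      b k = ((volume (L k)).toReal)⁻¹ • ∫ x in L k, x) :
    0 ≤ ⟪X i - X j, b i - b j⟫ :=
  laguerre_barycenters_monotone_general d N Ω hΩ X w L hL i j hipos hjpos b hb
end

section
/- Let Ω ⊆ ℝ^d be a compact set of positive Lebesgue measure, ε > 0, m_1, …, m_N > 0, τ ≥ 0, and U : (0,∞) → ℝ. For X = (x_1, …, x_N) ∈ (ℝ^d)^N define F_ε(X) as the infimum, over all Lebesgue-measurable labelings T : Ω → {1, …, N}, of ∫_Ω |x − x_{T(x)}|²/(2ε) dx + Σ_{i=1}^N U(m_i/|T^{-1}(i)|)·|T^{-1}(i)|, where a summand with |T^{-1}(i)| = 0 is interpreted as +∞. Suppose the labeling T* attains the infimum defining F_ε(X), each cell L_i := (T*)^{-1}(i) has positive Lebesgue measure, and let b_i be the barycenter of L_i. Define X' = (x_1', …, x_N') by x_i' := b_i + exp(−|L_i|·τ/(m_i·ε))·(x_i − b_i). Then F_ε(X') ≤ F_ε(X).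 -/
open MeasureTheory

/-- The cost of a measurable labeling `T` of `Ω`:
`∫_Ω |x - x_{T(x)}|²/(2ε) dx + Σᵢ U(mᵢ/|T⁻¹(i)|)·|T⁻¹(i)|`, with a summand equal to `+∞`
whenever the corresponding cell is Lebesgue-null. -/
noncomputable def laguerreCost {d N : ℕ} (Ω : Set (EuclideanSpace ℝ (Fin d)))
    (ε : ℝ) (m : Fin N → ℝ) (U : ℝ → ℝ)
    (X : Fin N → EuclideanSpace ℝ (Fin d))
    (T : EuclideanSpace ℝ (Fin d) → Fin N) : EReal :=
  ((∫ x in Ω, ‖x - X (T x)‖ ^ 2 / (2 * ε) : ℝ) : EReal)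
    + ∑ i, (if volume (T ⁻¹' {i} ∩ Ω) = 0 then (⊤ : EReal)
        else ((U (m i / (volume (T ⁻¹' {i} ∩ Ω)).toReal)
                * (volume (T ⁻¹' {i} ∩ Ω)).toReal : ℝ) : EReal))

/-- The discrete energy `F_ε(X)`: infimum of the labeling cost over all measurable
labelings `T : Ω → {1,…,N}`. -/
noncomputable def discreteEnergy {d N : ℕ} (Ω : Set (EuclideanSpace ℝ (Fin d)))
    (ε : ℝ) (m : Fin N → ℝ) (U : ℝ → ℝ)
    (X : Fin N → EuclideanSpace ℝ (Fin d)) : EReal :=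
  ⨅ T : {T : EuclideanSpace ℝ (Fin d) → Fin N // Measurable T},
    laguerreCost Ω ε m U X T.1

/-! The labeling `T` stays admissible for `X'`, and only the transport part of its cost depends
on the sites. On each cell the parallel-axis identity
`∫_{L i} ‖x - y‖² = ∫_{L i} ‖x - b i‖² + |L i| ‖y - b i‖²` shows that this part grows with the
distances `‖y - b i‖`, which the exponential step multiplies by `exp (-…) ≤ 1`. Hence
`F_ε(X') ≤ cost(X', T) ≤ cost(X, T) = F_ε(X)`. -/

open Set

section ParallelAxis

variable {E : Type*} [NormedAddCommGroup E] [InnerProductSpace ℝ E] [CompleteSpace E]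
  [MeasurableSpace E] {μ : Measure E} [IsFiniteMeasure μ]

theorem integral_norm_sub_sq_eq_integral_norm_sub_average_sq_add
    (hμ : MemLp (fun x ↦ x) 2 μ) (w : E) :
    ∫ x, ‖x - w‖ ^ 2 ∂μ
      = ∫ x, ‖x - ⨍ y, y ∂μ‖ ^ 2 ∂μ + μ.real univ * ‖w - ⨍ y, y ∂μ‖ ^ 2 := by
  set c := ⨍ y, y ∂μ
  have hsq : Integrable (fun x ↦ ‖x - c‖ ^ 2) μ :=
    (hμ.sub (memLp_const c)).integrable_norm_pow two_ne_zero
  have hcenter : Integrable (fun x ↦ x - c) μ :=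
    (hμ.integrable one_le_two).sub (integrable_const c)
  have hinner : Integrable (fun x ↦ 2 * inner ℝ (w - c) (x - c)) μ :=
    (hcenter.const_inner (w - c)).const_mul 2
  have hexpand (x : E) :
      ‖x - w‖ ^ 2 = ‖x - c‖ ^ 2 - 2 * inner ℝ (w - c) (x - c) + ‖w - c‖ ^ 2 := by
    rw [← sub_sub_sub_cancel_right x w c, norm_sub_sq_real, real_inner_comm]
  have hcentered : ∫ x, inner ℝ (w - c) (x - c) ∂μ = 0 := by
    rw [integral_inner hcenter, integral_sub_average, inner_zero_right]
  simp_rw [hexpand]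
  rw [integral_add (f := fun x ↦ ‖x - c‖ ^ 2 - 2 * inner ℝ (w - c) (x - c)) (hsq.sub hinner)
    (integrable_const _), integral_sub hsq hinner, integral_const_mul, hcentered, integral_const,
    smul_eq_mul]
  ring

theorem integral_norm_sub_sq_le_of_norm_sub_average_le (hμ : MemLp (fun x ↦ x) 2 μ) {y z : E}
    (h : ‖z - ⨍ x, x ∂μ‖ ≤ ‖y - ⨍ x, x ∂μ‖) :
    ∫ x, ‖x - z‖ ^ 2 ∂μ ≤ ∫ x, ‖x - y‖ ^ 2 ∂μ := by
  rw [integral_norm_sub_sq_eq_integral_norm_sub_average_sq_add hμ z,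
    integral_norm_sub_sq_eq_integral_norm_sub_average_sq_add hμ y]
  gcongr

end ParallelAxis

theorem IsCompact.memLp_id_restrict {E : Type*} [NormedAddCommGroup E] [MeasurableSpace E]
    [OpensMeasurableSpace E] {μ : Measure E} [IsFiniteMeasureOnCompacts μ] {K : Set E}
    (hK : IsCompact K) (p : ENNReal) : MemLp (fun x ↦ x) p (μ.restrict K) := by
  have : IsFiniteMeasure (μ.restrict K) := isFiniteMeasure_restrict.2 hK.measure_lt_top.ne
  obtain ⟨R, hR⟩ := hK.isBounded.exists_norm_le
  exact .of_bound (continuousOn_id.aestronglyMeasurable_of_isCompact hK hK.measurableSet) R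
    (ae_restrict_of_forall_mem hK.measurableSet hR)

theorem integral_comp_eq_sum_setIntegral_preimage {α ι F : Type*} [MeasurableSpace α]
    [Fintype ι] [MeasurableSpace ι] [MeasurableSingletonClass ι] [NormedAddCommGroup F]
    [NormedSpace ℝ F] {μ : Measure α} {T : α → ι} (hT : Measurable T)
    {f : ι → α → F} (hf : ∀ i, IntegrableOn (f i) (T ⁻¹' {i}) μ) :
    ∫ x, f (T x) x ∂μ = ∑ i, ∫ x in T ⁻¹' {i}, f i x ∂μ := by
  have hfiber (i : ι) : MeasurableSet (T ⁻¹' {i}) := hT (measurableSet_singleton i)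
  have hsplit : (fun x ↦ f (T x) x) = fun x ↦ ∑ i, (T ⁻¹' {i}).indicator (f i) x := by
    ext x
    classical
    simp [Set.indicator_apply]
  rw [hsplit, integral_finsetSum _ fun i _ ↦ (hf i).integrable_indicator (hfiber i)]
  simp_rw [integral_indicator (hfiber _)]

theorem integral_norm_sub_comp_sq_le {E ι : Type*} [NormedAddCommGroup E]
    [InnerProductSpace ℝ E] [CompleteSpace E] [MeasurableSpace E] [Fintype ι]
    [MeasurableSpace ι] [MeasurableSingletonClass ι] {μ : Measure E} [IsFiniteMeasure μ]
    (hμ : MemLp (fun x ↦ x) 2 μ) {T : E → ι} (hT : Measurable T) {Y Y' : ι → E}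
    (hY : ∀ i, ‖Y' i - ⨍ x in T ⁻¹' {i}, x ∂μ‖ ≤ ‖Y i - ⨍ x in T ⁻¹' {i}, x ∂μ‖) :
    ∫ x, ‖x - Y' (T x)‖ ^ 2 ∂μ ≤ ∫ x, ‖x - Y (T x)‖ ^ 2 ∂μ := by
  have hint (Z : ι → E) (i : ι) : IntegrableOn (fun x ↦ ‖x - Z i‖ ^ 2) (T ⁻¹' {i}) μ :=
    ((hμ.restrict _).sub (memLp_const (Z i))).integrable_norm_pow two_ne_zero
  rw [integral_comp_eq_sum_setIntegral_preimage hT (hint Y'),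
    integral_comp_eq_sum_setIntegral_preimage hT (hint Y)]
  exact Finset.sum_le_sum fun i _ ↦
    integral_norm_sub_sq_le_of_norm_sub_average_le (hμ.restrict _) (hY i)

theorem norm_add_exp_smul_sub_sub_le {F : Type*} [NormedAddCommGroup F] [NormedSpace ℝ F]
    (b x : F) {t : ℝ} (ht : t ≤ 0) : ‖b + Real.exp t • (x - b) - b‖ ≤ ‖x - b‖ := by
  rw [add_sub_cancel_left, norm_smul, Real.norm_of_nonneg (Real.exp_pos t).le]
  exact mul_le_of_le_one_left (norm_nonneg _) (Real.exp_le_one_iff.2 ht)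

theorem discreteEnergy_dissipation_general
    (d N : ℕ) (Ω : Set (EuclideanSpace ℝ (Fin d))) (hΩ : IsCompact Ω)
    (ε : ℝ) (hε : 0 < ε) (m : Fin N → ℝ) (hm : ∀ i, 0 < m i)
    (τ : ℝ) (hτ : 0 ≤ τ) (U : ℝ → ℝ)
    (X : Fin N → EuclideanSpace ℝ (Fin d))
    (T : EuclideanSpace ℝ (Fin d) → Fin N) (hTmeas : Measurable T)
    (hTopt : laguerreCost Ω ε m U X T = discreteEnergy Ω ε m U X)
    (L : Fin N → Set (EuclideanSpace ℝ (Fin d)))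
    (hL : ∀ i, L i = T ⁻¹' {i} ∩ Ω)
    (b : Fin N → EuclideanSpace ℝ (Fin d))
    (hb : ∀ i, b i = ((volume (L i)).toReal)⁻¹ • ∫ x in L i, x)
    (X' : Fin N → EuclideanSpace ℝ (Fin d))
    (hX' : ∀ i, X' i = b i
      + Real.exp (-((volume (L i)).toReal * τ) / (m i * ε)) • (X i - b i)) :
    discreteEnergy Ω ε m U X' ≤ discreteEnergy Ω ε m U X := by
  obtain rfl : L = fun i ↦ T ⁻¹' {i} ∩ Ω := funext hL
  have htransport : ∫ x in Ω, ‖x - X' (T x)‖ ^ 2 ≤ ∫ x in Ω, ‖x - X (T x)‖ ^ 2 := by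
    have : IsFiniteMeasure (volume.restrict Ω) :=
      isFiniteMeasure_restrict.2 hΩ.measure_lt_top.ne
    refine integral_norm_sub_comp_sq_le (hΩ.memLp_id_restrict 2) hTmeas fun i ↦ ?_
    rw [Measure.restrict_restrict (hTmeas (measurableSet_singleton i)), setAverage_eq,
      measureReal_def, ← hb, hX']
    refine norm_add_exp_smul_sub_sub_le _ _ (div_nonpos_of_nonpos_of_nonneg ?_ ?_)
    · exact neg_nonpos.2 (mul_nonneg ENNReal.toReal_nonneg hτ)
    · exact (mul_pos (hm i) hε).le
  calc discreteEnergy Ω ε m U X' ≤ laguerreCost Ω ε m U X' T :=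
        iInf_le (fun T : {T // Measurable T} ↦ laguerreCost Ω ε m U X' T.1) ⟨T, hTmeas⟩
    _ ≤ laguerreCost Ω ε m U X T := by
        unfold laguerreCost
        rw [integral_div, integral_div]
        gcongr
    _ = discreteEnergy Ω ε m U X := hTopt

/-- One step of the explicit exponential time discretization of the gradient flow of `F_ε`
dissipates the energy: `F_ε(X') ≤ F_ε(X)`. -/
theorem discreteEnergy_dissipation
    (d N : ℕ) (Ω : Set (EuclideanSpace ℝ (Fin d))) (hΩ : IsCompact Ω)
    (hΩpos : 0 < volume Ω)
    (ε : ℝ) (hε : 0 < ε) (m : Fin N → ℝ) (hm : ∀ i, 0 < m i)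
    (τ : ℝ) (hτ : 0 ≤ τ) (U : ℝ → ℝ)
    (X : Fin N → EuclideanSpace ℝ (Fin d))
    (T : EuclideanSpace ℝ (Fin d) → Fin N) (hTmeas : Measurable T)
    (hTopt : laguerreCost Ω ε m U X T = discreteEnergy Ω ε m U X)
    (L : Fin N → Set (EuclideanSpace ℝ (Fin d)))
    (hL : ∀ i, L i = T ⁻¹' {i} ∩ Ω)
    (hpos : ∀ i, 0 < volume (L i))
    (b : Fin N → EuclideanSpace ℝ (Fin d))
    (hb : ∀ i, b i = ((volume (L i)).toReal)⁻¹ • ∫ x in L i, x)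
    (X' : Fin N → EuclideanSpace ℝ (Fin d))
    (hX' : ∀ i, X' i = b i
      + Real.exp (-((volume (L i)).toReal * τ) / (m i * ε)) • (X i - b i)) :
    discreteEnergy Ω ε m U X' ≤ discreteEnergy Ω ε m U X :=
  discreteEnergy_dissipation_general d N Ω hΩ ε hε m hm τ hτ U X T hTmeas hTopt L hL b hb X' hX'
end

section
/- Let Ω ⊆ ℝ^d be a compact set of positive Lebesgue measure |Ω|, ε > 0, m_1, …, m_N > 0, and U : (0,∞) → ℝ. For X = (x_1, …, x_N) ∈ (ℝ^d)^N define F_ε(X) as the infimum, over all Lebesgue-measurable labelings T : Ω → {1, …, N}, of ∫_Ω |x − x_{T(x)}|²/(2ε) dx + Σ_{i=1}^N U(m_i/|T^{-1}(i)|)·|T^{-1}(i)|, where a summand with |T^{-1}(i)| = 0 is interpreted as +∞. Suppose a labeling T attains the infimum defining F_ε(X), each cell L_i := T^{-1}(i) has positive Lebesgue measure, and let b_i be the barycenter of L_i. Then for every Y = (y_1, …, y_N) ∈ (ℝ^d)^N one has F_ε(Y) ≤ F_ε(X) + Σ_{i=1}^N (|L_i|/ε)·⟨x_i − b_i, y_i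 − x_i⟩ + (|Ω|/(2ε))·Σ_{i=1}^N |x_i − y_i|². -/
open MeasureTheory RealInnerProductSpace

/-!
Keep the optimal labeling `T` and move only the centres: `F_ε(Y)` is at most the cost of `T`
at `Y`, and the internal-energy part of that cost does not depend on the centres. On the cell
`Lᵢ`, expanding `‖x - yᵢ‖²` around `xᵢ` gives
`‖x - xᵢ‖² + 2⟪xᵢ - yᵢ, x - xᵢ⟫ + ‖xᵢ - yᵢ‖²`, and the cross term integrates to
`2|Lᵢ|⟪xᵢ - bᵢ, yᵢ - xᵢ⟫`. Bounding `|Lᵢ| ≤ |Ω|` in the quadratic term gives the estimate.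
-/

section Variance

variable {α E : Type*} [MeasurableSpace α] {μ : Measure α} [IsFiniteMeasure μ]
  [NormedAddCommGroup E] [InnerProductSpace ℝ E] [CompleteSpace E] {f : α → E}

theorem integral_norm_sub_sq_eq {p : E} (hf : Integrable f μ)
    (hp : Integrable (fun x => ‖f x - p‖ ^ 2) μ) (y : E) :
    ∫ x, ‖f x - y‖ ^ 2 ∂μ
      = ∫ x, ‖f x - p‖ ^ 2 ∂μ + 2 * ⟪p - y, ∫ x, f x ∂μ - μ.real Set.univ • p⟫
        + μ.real Set.univ * ‖p - y‖ ^ 2 := by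
  have hfp : Integrable (fun x => f x - p) μ := hf.sub (integrable_const p)
  have hcross : Integrable (fun x => 2 * ⟪p - y, f x - p⟫) μ :=
    (hfp.const_inner (p - y)).const_mul 2
  have hexpand : ∀ x, ‖f x - y‖ ^ 2 = ‖f x - p‖ ^ 2 + 2 * ⟪p - y, f x - p⟫ + ‖p - y‖ ^ 2 := by
    intro x
    rw [show f x - y = (f x - p) + (p - y) by abel, norm_add_sq_real, real_inner_comm]
  have hsum : Integrable (fun x => ‖f x - p‖ ^ 2 + 2 * ⟪p - y, f x - p⟫) μ := hp.add hcross
  simp_rw [hexpand]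
  rw [integral_add hsum (integrable_const _), integral_add hp hcross,
    integral_const_mul, integral_inner hfp,
    integral_sub hf (integrable_const p), integral_const, integral_const, smul_eq_mul]

end Variance

section Barycenter

variable {E : Type*} [NormedAddCommGroup E] [InnerProductSpace ℝ E] [MeasurableSpace E]
  {μ : Measure E} {s : Set E}

noncomputable def barycenter (μ : Measure E) (s : Set E) : E :=
  (μ.real s)⁻¹ • ∫ x in s, x ∂μ

theorem measureReal_smul_barycenter (hs : μ s ≠ ⊤) :
    μ.real s • barycenter μ s = ∫ x in s, x ∂μ := by
  by_cases h : μ.real s = 0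
  · rw [h, zero_smul, Measure.restrict_eq_zero.2 ((measureReal_eq_zero_iff hs).1 h),
      integral_zero_measure]
  · exact smul_inv_smul₀ h _

theorem setIntegral_norm_sub_sq_eq [CompleteSpace E] {p : E} (hs : μ s ≠ ⊤)
    (hid : IntegrableOn (fun x => x) s μ) (hp : IntegrableOn (fun x => ‖x - p‖ ^ 2) s μ) (y : E) :
    ∫ x in s, ‖x - y‖ ^ 2 ∂μ
      = ∫ x in s, ‖x - p‖ ^ 2 ∂μ
        + μ.real s * (2 * ⟪p - barycenter μ s, y - p⟫ + ‖p - y‖ ^ 2) := by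
  have : IsFiniteMeasure (μ.restrict s) := isFiniteMeasure_restrict.2 hs
  rw [integral_norm_sub_sq_eq (f := fun x => x) hid hp y, measureReal_restrict_apply_univ,
    ← measureReal_smul_barycenter hs, ← smul_sub, inner_smul_right]
  have hswap : ⟪p - y, barycenter μ s - p⟫ = ⟪p - barycenter μ s, y - p⟫ := by
    rw [← inner_neg_neg, neg_sub, neg_sub, real_inner_comm]
  rw [hswap]
  ring

end Barycenter

section Partition

variable {α ι G : Type*} [MeasurableSpace α] {μ : Measure α} [Fintype ι] [MeasurableSpace ι]
  [MeasurableSingletonClass ι] [NormedAddCommGroup G] [NormedSpace ℝ G]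

theorem setIntegral_eq_sum_setIntegral_fiber {T : α → ι} (hT : Measurable T) {s : Set α}
    (hs : MeasurableSet s) {g : ι → α → G} (hg : ∀ i, IntegrableOn (g i) (T ⁻¹' {i} ∩ s) μ) :
    ∫ x in s, g (T x) x ∂μ = ∑ i, ∫ x in T ⁻¹' {i} ∩ s, g i x ∂μ := by
  have hfiber : ∀ i, MeasurableSet (T ⁻¹' {i} ∩ s) :=
    fun i => (hT (measurableSet_singleton i)).inter hs
  have heq : ∀ i, Set.EqOn (fun x => g (T x) x) (g i) (T ⁻¹' {i} ∩ s) :=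
    fun i x hx => congrArg (g · x) hx.1
  have hcover : ⋃ i, T ⁻¹' {i} ∩ s = s := by
    ext x
    simp
  have hdisj : Pairwise (Function.onFun Disjoint fun i => T ⁻¹' {i} ∩ s) :=
    fun i j hij => Set.disjoint_left.2 fun x hxi hxj => hij (hxi.1.symm.trans hxj.1)
  conv_lhs => rw [← hcover]
  rw [integral_iUnion_fintype hfiber hdisj fun i => (hg i).congr_fun (heq i).symm (hfiber i)]
  exact Finset.sum_congr rfl fun i _ => setIntegral_congr_fun (hfiber i) (heq i)

end Partition

section Transport

variable {ι E : Type*} [Fintype ι] [MeasurableSpace ι] [MeasurableSingletonClass ι]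
  [NormedAddCommGroup E] [InnerProductSpace ℝ E] [CompleteSpace E] [MeasurableSpace E]
  [OpensMeasurableSpace E] {μ : Measure E} [IsFiniteMeasureOnCompacts μ]
  {Ω : Set E} {T : E → ι}

theorem setIntegral_norm_sub_comp_sq_eq (hΩ : IsCompact Ω) (hT : Measurable T) (X Y : ι → E) :
    ∫ x in Ω, ‖x - Y (T x)‖ ^ 2 ∂μ
      = ∫ x in Ω, ‖x - X (T x)‖ ^ 2 ∂μ
        + ∑ i, μ.real (T ⁻¹' {i} ∩ Ω)
            * (2 * ⟪X i - barycenter μ (T ⁻¹' {i} ∩ Ω), Y i - X i⟫ + ‖X i - Y i‖ ^ 2) := by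
  have hfiber : ∀ i, T ⁻¹' {i} ∩ Ω ⊆ Ω := fun i => Set.inter_subset_right
  have hsq : ∀ (i) (q : E), IntegrableOn (fun x => ‖x - q‖ ^ 2) (T ⁻¹' {i} ∩ Ω) μ :=
    fun i q => ((by fun_prop : Continuous fun x : E => ‖x - q‖ ^ 2).continuousOn
      |>.integrableOn_compact hΩ).mono_set (hfiber i)
  have hid : ∀ i, IntegrableOn (fun x : E => x) (T ⁻¹' {i} ∩ Ω) μ :=
    fun i => (continuousOn_id.integrableOn_compact hΩ).mono_set (hfiber i)
  have hfin : ∀ i, μ (T ⁻¹' {i} ∩ Ω) ≠ ⊤ :=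
    fun i => (measure_mono (hfiber i)).trans_lt hΩ.measure_lt_top |>.ne
  rw [setIntegral_eq_sum_setIntegral_fiber hT hΩ.measurableSet fun i => hsq i (Y i),
    setIntegral_eq_sum_setIntegral_fiber hT hΩ.measurableSet fun i => hsq i (X i),
    ← Finset.sum_add_distrib]
  exact Finset.sum_congr rfl fun i _ => setIntegral_norm_sub_sq_eq (hfin i) (hid i) (hsq i (X i)) _

theorem setIntegral_norm_sub_comp_sq_div_le (hΩ : IsCompact Ω) (hT : Measurable T)
    {ε : ℝ} (hε : 0 ≤ ε) (X Y : ι → E) :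
    ∫ x in Ω, ‖x - Y (T x)‖ ^ 2 / (2 * ε) ∂μ
      ≤ ∫ x in Ω, ‖x - X (T x)‖ ^ 2 / (2 * ε) ∂μ
        + (∑ i, (μ.real (T ⁻¹' {i} ∩ Ω) / ε)
              * ⟪X i - barycenter μ (T ⁻¹' {i} ∩ Ω), Y i - X i⟫
          + (μ.real Ω / (2 * ε)) * ∑ i, ‖X i - Y i‖ ^ 2) := by
  have hmono : ∀ i, μ.real (T ⁻¹' {i} ∩ Ω) ≤ μ.real Ω :=
    fun i => measureReal_mono Set.inter_subset_right hΩ.measure_lt_top.ne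
  have hcells : ∑ i, μ.real (T ⁻¹' {i} ∩ Ω) * ‖X i - Y i‖ ^ 2
      ≤ μ.real Ω * ∑ i, ‖X i - Y i‖ ^ 2 := by
    rw [Finset.mul_sum]
    exact Finset.sum_le_sum fun i _ => mul_le_mul_of_nonneg_right (hmono i) (sq_nonneg _)
  have hsplit : (∑ i, μ.real (T ⁻¹' {i} ∩ Ω)
        * (2 * ⟪X i - barycenter μ (T ⁻¹' {i} ∩ Ω), Y i - X i⟫ + ‖X i - Y i‖ ^ 2)) / (2 * ε)
      = ∑ i, (μ.real (T ⁻¹' {i} ∩ Ω) / ε) * ⟪X i - barycenter μ (T ⁻¹' {i} ∩ Ω), Y i - X i⟫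
        + (∑ i, μ.real (T ⁻¹' {i} ∩ Ω) * ‖X i - Y i‖ ^ 2) / (2 * ε) := by
    simp only [Finset.sum_div, ← Finset.sum_add_distrib]
    exact Finset.sum_congr rfl fun i _ => by ring
  rw [integral_div, integral_div, setIntegral_norm_sub_comp_sq_eq hΩ hT X Y, add_div, hsplit,
    div_mul_eq_mul_div]
  gcongr

end Transport

theorem EReal.coe_finset_sum {ι : Type*} (s : Finset ι) (f : ι → ℝ) :
    ((∑ i ∈ s, f i : ℝ) : EReal) = ∑ i ∈ s, (f i : EReal) :=
  map_sum (⟨⟨Real.toEReal, EReal.coe_zero⟩, EReal.coe_add⟩ : ℝ →+ EReal) f s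

section LaguerreCost

variable {d N : ℕ} {Ω : Set (EuclideanSpace ℝ (Fin d))} {ε : ℝ} {m : Fin N → ℝ} {U : ℝ → ℝ}
  {T : EuclideanSpace ℝ (Fin d) → Fin N}

theorem laguerreCost_eq_coe (hT : ∀ i, volume (T ⁻¹' {i} ∩ Ω) ≠ 0)
    (X : Fin N → EuclideanSpace ℝ (Fin d)) :
    laguerreCost Ω ε m U X T
      = (((∫ x in Ω, ‖x - X (T x)‖ ^ 2 / (2 * ε))
          + ∑ i, U (m i / (volume (T ⁻¹' {i} ∩ Ω)).toReal) * (volume (T ⁻¹' {i} ∩ Ω)).toReal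
          : ℝ) : EReal) := by
  simp only [laguerreCost, if_neg (hT _), EReal.coe_add, EReal.coe_finset_sum]

theorem laguerreCost_le_add_of_transport_le (hT : ∀ i, volume (T ⁻¹' {i} ∩ Ω) ≠ 0)
    {X Y : Fin N → EuclideanSpace ℝ (Fin d)} {r : ℝ}
    (h : ∫ x in Ω, ‖x - Y (T x)‖ ^ 2 / (2 * ε) ≤ (∫ x in Ω, ‖x - X (T x)‖ ^ 2 / (2 * ε)) + r) :
    laguerreCost Ω ε m U Y T ≤ laguerreCost Ω ε m U X T + r := by
  rw [laguerreCost_eq_coe hT, laguerreCost_eq_coe hT, ← EReal.coe_add, EReal.coe_le_coe_iff]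
  linarith

theorem discreteEnergy_le_laguerreCost (hT : Measurable T) (X : Fin N → EuclideanSpace ℝ (Fin d)) :
    discreteEnergy Ω ε m U X ≤ laguerreCost Ω ε m U X T :=
  iInf_le (fun T : {T : EuclideanSpace ℝ (Fin d) → Fin N // Measurable T} =>
    laguerreCost Ω ε m U X T.1) ⟨T, hT⟩

end LaguerreCost

theorem discreteEnergy_superdifferential_general
    (d N : ℕ) (Ω : Set (EuclideanSpace ℝ (Fin d))) (hΩ : IsCompact Ω)
    (ε : ℝ) (hε : 0 < ε) (m : Fin N → ℝ) (U : ℝ → ℝ)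
    (X : Fin N → EuclideanSpace ℝ (Fin d))
    (T : EuclideanSpace ℝ (Fin d) → Fin N) (hTmeas : Measurable T)
    (hTopt : laguerreCost Ω ε m U X T = discreteEnergy Ω ε m U X)
    (L : Fin N → Set (EuclideanSpace ℝ (Fin d)))
    (hL : ∀ i, L i = T ⁻¹' {i} ∩ Ω)
    (hpos : ∀ i, 0 < volume (L i))
    (b : Fin N → EuclideanSpace ℝ (Fin d))
    (hb : ∀ i, b i = ((volume (L i)).toReal)⁻¹ • ∫ x in L i, x) :
    ∀ Y : Fin N → EuclideanSpace ℝ (Fin d),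
      discreteEnergy Ω ε m U Y
        ≤ discreteEnergy Ω ε m U X
          + ((∑ i, ((volume (L i)).toReal / ε) * ⟪X i - b i, Y i - X i⟫
              + ((volume Ω).toReal / (2 * ε)) * ∑ i, ‖X i - Y i‖ ^ 2 : ℝ) : EReal) := by
  intro Y
  obtain rfl : L = fun i => T ⁻¹' {i} ∩ Ω := funext hL
  obtain rfl : b = fun i => barycenter volume (T ⁻¹' {i} ∩ Ω) := funext hb
  rw [← hTopt]
  calc discreteEnergy Ω ε m U Y
      ≤ laguerreCost Ω ε m U Y T := discreteEnergy_le_laguerreCost hTmeas Y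
    _ ≤ _ := laguerreCost_le_add_of_transport_le (fun i => (hpos i).ne')
      (setIntegral_norm_sub_comp_sq_div_le hΩ hTmeas hε.le X Y)

/-- Fréchet superdifferential inequality for the discrete energy: for every `Y`,
`F_ε(Y) ≤ F_ε(X) + Σᵢ (|Lᵢ|/ε)⟨xᵢ - bᵢ, yᵢ - xᵢ⟩ + (|Ω|/(2ε)) Σᵢ |xᵢ - yᵢ|²`. -/
theorem discreteEnergy_superdifferential
    (d N : ℕ) (Ω : Set (EuclideanSpace ℝ (Fin d))) (hΩ : IsCompact Ω)
    (hΩpos : 0 < volume Ω)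
    (ε : ℝ) (hε : 0 < ε) (m : Fin N → ℝ) (hm : ∀ i, 0 < m i) (U : ℝ → ℝ)
    (X : Fin N → EuclideanSpace ℝ (Fin d))
    (T : EuclideanSpace ℝ (Fin d) → Fin N) (hTmeas : Measurable T)
    (hTopt : laguerreCost Ω ε m U X T = discreteEnergy Ω ε m U X)
    (L : Fin N → Set (EuclideanSpace ℝ (Fin d)))
    (hL : ∀ i, L i = T ⁻¹' {i} ∩ Ω)
    (hpos : ∀ i, 0 < volume (L i))
    (b : Fin N → EuclideanSpace ℝ (Fin d))
    (hb : ∀ i, b i = ((volume (L i)).toReal)⁻¹ • ∫ x in L i, x) :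
    ∀ Y : Fin N → EuclideanSpace ℝ (Fin d),
      discreteEnergy Ω ε m U Y
        ≤ discreteEnergy Ω ε m U X
          + ((∑ i, ((volume (L i)).toReal / ε) * ⟪X i - b i, Y i - X i⟫
              + ((volume Ω).toReal / (2 * ε)) * ∑ i, ‖X i - Y i‖ ^ 2 : ℝ) : EReal) :=
  discreteEnergy_superdifferential_general d N Ω hΩ ε hε m U X T hTmeas hTopt L hL hpos b hb
end

section
/- Let K ⊆ ℝ^d be a nonempty closed convex set, let T > 0, and let x : [0,T] → ℝ^d be differentiable. Suppose there are functions λ : [0,T] → [0,∞) and b : [0,T] → K such that x'(t) = −λ(t)·(x(t) − b(t)) for every t ∈ [0,T], and suppose x(0) ∈ K. Then x(t) ∈ K for all t ∈ [0,T]. -/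
/-!
Let `f t = infDist (x t) K ^ 2`. If `y` is the nearest point of `K` to `x t`, then
`‖x z - y‖ ^ 2` lies above `f` and touches it at `t`, and its derivative
`2 ⟪x t - y, x' t⟫` is nonpositive because the velocity points towards `b t ∈ K`, which lies
on the far side of the supporting hyperplane of `K` at `y`. So the upper right Dini
derivative of `f` is nonpositive, and `f`, which vanishes at `0`, stays zero.
-/

open Metric Set Filter
open scoped RealInnerProductSpace Topology

theorem eventually_slope_lt_of_le_of_hasDerivWithinAt {f g : ℝ → ℝ} {t g' r : ℝ}
    (hfg : ∀ᶠ z in 𝓝[>] t, f z ≤ g z) (hft : f t = g t)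
    (hg : HasDerivWithinAt g g' (Ioi t) t) (hr : g' < r) :
    ∀ᶠ z in 𝓝[>] t, slope f t z < r := by
  have hslope : ∀ᶠ z in 𝓝[>] t, slope g t z < r :=
    ((hasDerivWithinAt_iff_tendsto_slope' self_notMem_Ioi).mp hg).eventually_lt_const hr
  filter_upwards [hfg, hslope, self_mem_nhdsWithin] with z hfgz hgz hz
  calc slope f t z ≤ slope g t z := by
        simp only [slope_def_field, hft]
        gcongr
        exact (sub_pos.mpr hz).le
    _ < r := hgz

section InnerProductSpace

variable {E : Type*} [NormedAddCommGroup E] [InnerProductSpace ℝ E]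

theorem exists_infDist_eq_norm_sub_and_inner_le_zero [CompleteSpace E] {K : Set E}
    (hne : K.Nonempty) (hcl : IsClosed K) (hcv : Convex ℝ K) (p : E) :
    ∃ y ∈ K, infDist p K = ‖p - y‖ ∧ ∀ w ∈ K, ⟪p - y, w - y⟫ ≤ 0 := by
  obtain ⟨y, hyK, hy⟩ := exists_norm_eq_iInf_of_complete_convex hne hcl.isComplete hcv p
  refine ⟨y, hyK, ?_, (norm_eq_iInf_iff_real_inner_le_zero hcv hyK).mp hy⟩
  simp only [hy, infDist_eq_iInf, dist_eq_norm]

theorem inner_neg_smul_sub_le_zero {p y b : E} {l : ℝ} (hb : ⟪p - y, b - y⟫ ≤ 0)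
    (hl : 0 ≤ l) : ⟪p - y, -l • (p - b)⟫ ≤ 0 := by
  have hpb : ⟪p - y, p - b⟫ = ‖p - y‖ ^ 2 - ⟪p - y, b - y⟫ := by
    rw [← real_inner_self_eq_norm_sq, ← inner_sub_right, sub_sub_sub_cancel_right]
  rw [real_inner_smul_right, hpb]
  nlinarith [sq_nonneg ‖p - y‖]

/-- The premise `∀ w ∈ K, ⟪x t - y, w - y⟫ ≤ 0` characterises `y ∈ K` as the nearest point of
`K` to `x t`. -/
theorem IsClosed.mem_of_inner_deriv_le_zero [CompleteSpace E] {K : Set E} (hcl : IsClosed K)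
    (hcv : Convex ℝ K) {x x' : ℝ → E} {a b : ℝ} (hx : ContinuousOn x (Icc a b))
    (hderiv : ∀ t ∈ Ico a b, HasDerivWithinAt x (x' t) (Ici t) t)
    (hinner : ∀ t ∈ Ico a b, ∀ y ∈ K, (∀ w ∈ K, ⟪x t - y, w - y⟫ ≤ 0) → ⟪x t - y, x' t⟫ ≤ 0)
    (ha : x a ∈ K) : ∀ t ∈ Icc a b, x t ∈ K := by
  have hne : K.Nonempty := ⟨x a, ha⟩
  set f : ℝ → ℝ := fun t => infDist (x t) K ^ 2
  have hf : ContinuousOn f (Icc a b) := ((continuous_infDist_pt K).comp_continuousOn hx).pow 2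
  have hdini : ∀ t ∈ Ico a b, ∀ r, (0 : ℝ) < r → ∃ᶠ z in 𝓝[>] t, slope f t z < r := by
    intro t ht r hr
    obtain ⟨y, hyK, hdist, hproj⟩ :=
      exists_infDist_eq_norm_sub_and_inner_le_zero hne hcl hcv (x t)
    refine (eventually_slope_lt_of_le_of_hasDerivWithinAt (g := fun z => ‖x z - y‖ ^ 2)
      (Eventually.of_forall fun z => ?_) (by simp only [f, hdist])
      ((hderiv t ht).sub_const y).norm_sq.Ioi_of_Ici ?_).frequently
    · rw [← dist_eq_norm]
      exact pow_le_pow_left₀ infDist_nonneg (infDist_le_dist_of_mem hyK) 2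
    · linarith [hinner t ht y hyK hproj]
  intro t ht
  have hft : f t ≤ 0 :=
    image_le_of_liminf_slope_right_le_deriv_boundary hf (B := 0) (B' := 0)
      (by simp [f, infDist_zero_of_mem ha]) continuousOn_const
      (fun s _ => hasDerivWithinAt_const s _ 0) hdini ht
  exact (hcl.mem_iff_infDist_zero hne).mpr (pow_eq_zero_iff two_ne_zero |>.mp
    (le_antisymm hft (sq_nonneg _)))

end InnerProductSpace

theorem curve_stays_in_convex_general
    (d : ℕ) (K : Set (EuclideanSpace ℝ (Fin d)))
    (hKclosed : IsClosed K) (hKconvex : Convex ℝ K)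
    (T : ℝ)
    (x : ℝ → EuclideanSpace ℝ (Fin d))
    (lam : ℝ → ℝ) (hlam : ∀ t ∈ Set.Icc 0 T, 0 ≤ lam t)
    (b : ℝ → EuclideanSpace ℝ (Fin d)) (hb : ∀ t ∈ Set.Icc 0 T, b t ∈ K)
    (hderiv : ∀ t ∈ Set.Icc 0 T, HasDerivAt x (-(lam t) • (x t - b t)) t)
    (hx0 : x 0 ∈ K) :
    ∀ t ∈ Set.Icc 0 T, x t ∈ K :=
  hKclosed.mem_of_inner_deriv_le_zero hKconvex
    (fun t ht => (hderiv t ht).continuousAt.continuousWithinAt)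
    (fun t ht => (hderiv t (Ico_subset_Icc_self ht)).hasDerivWithinAt)
    (fun t ht _ _ hproj =>
      inner_neg_smul_sub_le_zero (hproj _ (hb t (Ico_subset_Icc_self ht)))
        (hlam t (Ico_subset_Icc_self ht)))
    hx0

/-- A curve attracted towards points of a nonempty closed convex set `K` with nonnegative
rates, starting in `K`, remains in `K`. -/
theorem curve_stays_in_convex
    (d : ℕ) (K : Set (EuclideanSpace ℝ (Fin d)))
    (hKne : K.Nonempty) (hKclosed : IsClosed K) (hKconvex : Convex ℝ K)
    (T : ℝ) (hT : 0 < T)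
    (x : ℝ → EuclideanSpace ℝ (Fin d))
    (lam : ℝ → ℝ) (hlam : ∀ t ∈ Set.Icc 0 T, 0 ≤ lam t)
    (b : ℝ → EuclideanSpace ℝ (Fin d)) (hb : ∀ t ∈ Set.Icc 0 T, b t ∈ K)
    (hderiv : ∀ t ∈ Set.Icc 0 T, HasDerivAt x (-(lam t) • (x t - b t)) t)
    (hx0 : x 0 ∈ K) :
    ∀ t ∈ Set.Icc 0 T, x t ∈ K :=
  curve_stays_in_convex_general d K hKclosed hKconvex T x lam hlam b hb hderiv hx0
end

section
/- Let T > 0, Λ ≥ 0, K ≥ 0, D ≥ 0, and let u, v : [0,T] → ℝ^d be differentiable curves. Suppose there exist α, β : [0,T] → [0,Λ] and a, b : [0,T] → ℝ^d such that for every t ∈ [0,T]: u'(t) = −α(t)·(u(t) − a(t)), v'(t) = −β(t)·(v(t) − b(t)), ⟨u(t) − v(t), a(t) − b(t)⟩ ≥ 0, |α(t) − β(t)| ≤ K·|u(t) − v(t)|, and |v(t) − b(t)| ≤ D. Then (d/dt)(|u(t) − v(t)|²/2) ≥ −(Λ + K·D)·|u(t) − v(t)|² for every t, and consequently |u(t)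 − v(t)|² ≥ exp(−2·(Λ + K·D)·t)·|u(0) − v(0)|² for all t ∈ [0,T]; in particular, if u(0) ≠ v(0) then u(t) ≠ v(t) for all t ∈ [0,T]. -/
/-!
Writing `w = u - v`, the velocity difference splits as
`-α w + α (a - b) + (β - α)(v - b)`. Against `w`, the first term costs at most `Λ‖w‖²`, the second
is nonnegative by monotonicity of the barycenters, and the third costs at most
`|α - β| ‖w‖ D ≤ K D ‖w‖²`. Hence `(‖w‖²)' ≥ -2(Λ + K D)‖w‖²`, and Grönwall's inequality applied
to `-‖w‖²` gives the exponential lower bound, which stays positive.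
-/

open RealInnerProductSpace Set Real

theorem exp_mul_le_of_deriv_right_ge {f f' : ℝ → ℝ} {c a b : ℝ}
    (hf : ContinuousOn f (Icc a b))
    (hf' : ∀ x ∈ Ico a b, HasDerivWithinAt f (f' x) (Ici x) x)
    (bound : ∀ x ∈ Ico a b, -c * f x ≤ f' x) :
    ∀ x ∈ Icc a b, exp (-c * (x - a)) * f a ≤ f x := by
  intro x hx
  have h := le_gronwallBound_of_liminf_deriv_right_le (f := fun x => -f x) (f' := fun x => -f' x)
    (δ := -f a) (K := -c) (ε := 0) hf.neg
    (fun x hx _ hr => (hf' x hx).neg.liminf_right_slope_le hr) le_rfl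
    (fun x hx => by linarith [bound x hx]) x hx
  rw [gronwallBound_ε0] at h
  linarith

section Relaxation

variable {E : Type*} [NormedAddCommGroup E] [InnerProductSpace ℝ E]

theorem neg_mul_norm_sq_le_inner_sub_relaxation {x y p q : E} {α β Λ K D : ℝ}
    (hα : α ∈ Icc 0 Λ) (hmono : 0 ≤ ⟪x - y, p - q⟫)
    (hlip : |α - β| ≤ K * ‖x - y‖) (hbound : ‖y - q‖ ≤ D) :
    -(Λ + K * D) * ‖x - y‖ ^ 2 ≤ ⟪x - y, -α • (x - p) - -β • (y - q)⟫ := by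
  have hsplit : -α • (x - p) - -β • (y - q) = -α • (x - y) + α • (p - q) + (β - α) • (y - q) := by
    module
  rw [hsplit, inner_add_right, inner_add_right, inner_smul_right, inner_smul_right,
    inner_smul_right, real_inner_self_eq_norm_sq]
  have hcontract : α * ‖x - y‖ ^ 2 ≤ Λ * ‖x - y‖ ^ 2 := by gcongr; exact hα.2
  have hattract : 0 ≤ α * ⟪x - y, p - q⟫ := mul_nonneg hα.1 hmono
  have hdrift : |(β - α) * ⟪x - y, y - q⟫| ≤ K * ‖x - y‖ * (‖x - y‖ * D) := by
    rw [abs_mul, abs_sub_comm]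
    have hinner : |⟪x - y, y - q⟫| ≤ ‖x - y‖ * D :=
      (abs_real_inner_le_norm _ _).trans (by gcongr)
    exact mul_le_mul hlip hinner (abs_nonneg _) ((abs_nonneg _).trans hlip)
  linarith [neg_abs_le ((β - α) * ⟪x - y, y - q⟫)]

end Relaxation

theorem no_collision_estimate_general
    (d : ℕ) (T : ℝ) (Λ K D : ℝ)
    (u v : ℝ → EuclideanSpace ℝ (Fin d))
    (α β : ℝ → ℝ) (a b : ℝ → EuclideanSpace ℝ (Fin d))
    (hα : ∀ t ∈ Set.Icc 0 T, α t ∈ Set.Icc 0 Λ)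
    (hu : ∀ t ∈ Set.Icc 0 T, HasDerivAt u (-(α t) • (u t - a t)) t)
    (hv : ∀ t ∈ Set.Icc 0 T, HasDerivAt v (-(β t) • (v t - b t)) t)
    (hmono : ∀ t ∈ Set.Icc 0 T, 0 ≤ ⟪u t - v t, a t - b t⟫)
    (hlip : ∀ t ∈ Set.Icc 0 T, |α t - β t| ≤ K * ‖u t - v t‖)
    (hbound : ∀ t ∈ Set.Icc 0 T, ‖v t - b t‖ ≤ D) :
    (∀ t ∈ Set.Icc 0 T,
        deriv (fun s => ‖u s - v s‖ ^ 2 / 2) t ≥ -(Λ + K * D) * ‖u t - v t‖ ^ 2)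
      ∧ (∀ t ∈ Set.Icc 0 T,
          ‖u t - v t‖ ^ 2 ≥ Real.exp (-2 * (Λ + K * D) * t) * ‖u 0 - v 0‖ ^ 2)
      ∧ (u 0 ≠ v 0 → ∀ t ∈ Set.Icc 0 T, u t ≠ v t) := by
  have hsq : ∀ t ∈ Icc 0 T, HasDerivAt (fun s => ‖u s - v s‖ ^ 2)
      (2 * ⟪u t - v t, -α t • (u t - a t) - -β t • (v t - b t)⟫) t := fun t ht =>
    ((hu t ht).sub (hv t ht)).norm_sq
  have hest : ∀ t ∈ Icc 0 T, -(Λ + K * D) * ‖u t - v t‖ ^ 2 ≤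
      ⟪u t - v t, -α t • (u t - a t) - -β t • (v t - b t)⟫ := fun t ht =>
    neg_mul_norm_sq_le_inner_sub_relaxation (hα t ht) (hmono t ht) (hlip t ht) (hbound t ht)
  have hgronwall : ∀ t ∈ Icc 0 T,
      exp (-2 * (Λ + K * D) * t) * ‖u 0 - v 0‖ ^ 2 ≤ ‖u t - v t‖ ^ 2 := by
    intro t ht
    simpa [mul_assoc] using exp_mul_le_of_deriv_right_ge (c := 2 * (Λ + K * D))
      (fun s hs => (hsq s hs).continuousAt.continuousWithinAt)
      (fun s hs => (hsq s (Ico_subset_Icc_self hs)).hasDerivWithinAt)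
      (fun s hs => by linarith [hest s (Ico_subset_Icc_self hs)]) t ht
  refine ⟨fun t ht => ?_, hgronwall, fun hne t ht heq => ?_⟩
  · rw [((hsq t ht).div_const 2).deriv]
    linarith [hest t ht]
  · have hpos : 0 < exp (-2 * (Λ + K * D) * t) * ‖u 0 - v 0‖ ^ 2 := by
      have : u 0 - v 0 ≠ 0 := sub_ne_zero.mpr hne
      positivity
    have hzero := hgronwall t ht
    rw [heq, sub_self, norm_zero, zero_pow two_ne_zero] at hzero
    exact hpos.not_ge hzero

/-- Pairwise-distance lower bound preventing particle collisions: under the monotonicity and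
Lipschitz hypotheses, `(d/dt)(|u-v|²/2) ≥ -(Λ + K·D)|u-v|²`, hence
`|u(t)-v(t)|² ≥ e^{-2(Λ+K·D)t} |u(0)-v(0)|²`; in particular distinct particles never collide. -/
theorem no_collision_estimate
    (d : ℕ) (T : ℝ) (hT : 0 < T) (Λ K D : ℝ)
    (hΛ : 0 ≤ Λ) (hK : 0 ≤ K) (hD : 0 ≤ D)
    (u v : ℝ → EuclideanSpace ℝ (Fin d))
    (α β : ℝ → ℝ) (a b : ℝ → EuclideanSpace ℝ (Fin d))
    (hα : ∀ t ∈ Set.Icc 0 T, α t ∈ Set.Icc 0 Λ)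
    (hβ : ∀ t ∈ Set.Icc 0 T, β t ∈ Set.Icc 0 Λ)
    (hu : ∀ t ∈ Set.Icc 0 T, HasDerivAt u (-(α t) • (u t - a t)) t)
    (hv : ∀ t ∈ Set.Icc 0 T, HasDerivAt v (-(β t) • (v t - b t)) t)
    (hmono : ∀ t ∈ Set.Icc 0 T, 0 ≤ ⟪u t - v t, a t - b t⟫)
    (hlip : ∀ t ∈ Set.Icc 0 T, |α t - β t| ≤ K * ‖u t - v t‖)
    (hbound : ∀ t ∈ Set.Icc 0 T, ‖v t - b t‖ ≤ D) :
    (∀ t ∈ Set.Icc 0 T,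
        deriv (fun s => ‖u s - v s‖ ^ 2 / 2) t ≥ -(Λ + K * D) * ‖u t - v t‖ ^ 2)
      ∧ (∀ t ∈ Set.Icc 0 T,
          ‖u t - v t‖ ^ 2 ≥ Real.exp (-2 * (Λ + K * D) * t) * ‖u 0 - v 0‖ ^ 2)
      ∧ (u 0 ≠ v 0 → ∀ t ∈ Set.Icc 0 T, u t ≠ v t) :=
  no_collision_estimate_general d T Λ K D u v α β a b hα hu hv hmono hlip hbound
end
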